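/- arXiv:2212.02408 — 6 statements merged into one kernel-verified Lean document; each statement's English description precedes it below -/
import Mathlib

section
/- Let P_m(x) = \sum_{k=0}^m a_k x^k be a real polynomial, A \in \mathbb{R}^{N\times N}, L \in \mathbb{R}^{N\times r}, D \in \mathbb{R}^{r\times r}, and Q = L D L^T. Then P_m(\mathcal{L}_A)[Q] := \sum_{k=0}^m a_k \mathcal{L}_A^k[Q] = \widetilde{L}\,(\Gamma \otimes D)\,\widetilde{L}^T, where \widetilde{L} = [L, AL, A^2L, \ldots, A^m L] \in \mathbb{R}^{N\times r(m+1)} is the block matrix whose i-th block column (i = 0,\ldots,m) is A^i L, \otimes denotes the Kronecker product, and \Gamma \in \mathbb{R}^{(m+1)\times(m+1)} has entries (0-indexed) \gamma_{i,j} = a_{i+j}\binom{i+j}{i} if i+j \le m and \gamma_{i,j} = 0 otherwise. -/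
open Matrix Finset
open scoped Kronecker

/-- The `k`-fold composition of the Lyapunov operator `X ↦ A X + X Aᵀ`. -/
noncomputable def lyapIter {N : ℕ} (A : Matrix (Fin N) (Fin N) ℝ) (k : ℕ)
    (X : Matrix (Fin N) (Fin N) ℝ) : Matrix (Fin N) (Fin N) ℝ :=
  (fun Y => A * Y + Y * Aᵀ)^[k] X

lemma lyapIter_eq {N : ℕ} (A : Matrix (Fin N) (Fin N) ℝ) (k : ℕ)
    (X : Matrix (Fin N) (Fin N) ℝ) :
    lyapIter A k X = ∑ i ∈ Finset.range (k+1),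
      (k.choose i : ℝ) • (A ^ i * X * (Aᵀ) ^ (k - i)) := by
  have hc : Commute (LinearMap.mulLeft ℝ A) (LinearMap.mulRight ℝ (Aᵀ)) :=
    LinearMap.commute_mulLeft_right A Aᵀ
  have h := hc.add_pow k
  have h2 : lyapIter A k X = ((LinearMap.mulLeft ℝ A + LinearMap.mulRight ℝ Aᵀ)^k) X := by
    rw [Module.End.pow_apply]
    rfl
  rw [h2, h]
  simp [LinearMap.sum_apply, Module.End.mul_apply, LinearMap.pow_mulLeft, LinearMap.pow_mulRight,
    mul_smul_comm, smul_mul_assoc, mul_assoc]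
  exact Finset.sum_congr rfl fun x _ => by
    rw [Nat.cast_smul_eq_nsmul, nsmul_eq_mul, ← mul_assoc, ← (Nat.cast_commute (k.choose x) (A^x)).eq, mul_assoc]

lemma sum_kronecker' {ι I J n p : Type*} [Fintype n] [Fintype p] [DecidableEq n] [DecidableEq p]
    (s : Finset ι) (f : ι → Matrix I J ℝ) (D : Matrix n p ℝ) :
    (∑ x ∈ s, f x) ⊗ₖ D = ∑ x ∈ s, (f x) ⊗ₖ D := by
  induction s using Finset.cons_induction with
  | empty => simp [Matrix.zero_kronecker]
  | cons a s h ih => simp [Finset.sum_cons, Matrix.add_kronecker, ih]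

lemma std_kron {N r m : ℕ}
    (A : Matrix (Fin N) (Fin N) ℝ) (L : Matrix (Fin N) (Fin r) ℝ)
    (D : Matrix (Fin r) (Fin r) ℝ)
    (Ltil : Matrix (Fin N) (Fin (m + 1) × Fin r) ℝ)
    (hLtil : ∀ i : Fin N, ∀ kj : Fin (m + 1) × Fin r,
      Ltil i kj = (A ^ (kj.1 : ℕ) * L) i kj.2)
    (i j : Fin (m+1)) :
      Ltil * ((Matrix.single i j (1:ℝ)) ⊗ₖ D) * Ltilᵀ
        = (A ^ (i:ℕ) * L) * D * (A ^ (j:ℕ) * L)ᵀ := by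
  ext p q
  simp only [Matrix.mul_apply, Matrix.kroneckerMap_apply, Fintype.sum_prod_type,
    Matrix.transpose_apply, hLtil, Matrix.single, Matrix.of_apply, ite_and,
    Finset.sum_mul, ite_mul, mul_ite, zero_mul, mul_zero,
    Finset.sum_ite_irrel, Finset.sum_const_zero, Finset.sum_ite_eq, Finset.sum_ite_eq',
    Finset.mem_univ, if_true, one_mul, mul_one]

lemma kron_sum_form {N r m : ℕ}
    (A : Matrix (Fin N) (Fin N) ℝ) (L : Matrix (Fin N) (Fin r) ℝ)
    (D : Matrix (Fin r) (Fin r) ℝ)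
    (Ltil : Matrix (Fin N) (Fin (m + 1) × Fin r) ℝ)
    (hLtil : ∀ i : Fin N, ∀ kj : Fin (m + 1) × Fin r,
      Ltil i kj = (A ^ (kj.1 : ℕ) * L) i kj.2)
    (G : Matrix (Fin (m+1)) (Fin (m+1)) ℝ) :
      Ltil * (G ⊗ₖ D) * Ltilᵀ
        = ∑ i : Fin (m+1), ∑ j : Fin (m+1),
            G i j • ((A ^ (i:ℕ) * L) * D * (A ^ (j:ℕ) * L)ᵀ) := by
  conv_lhs => rw [matrix_eq_sum_single G]
  rw [sum_kronecker']
  simp only [Matrix.sum_mul, Matrix.mul_sum]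
  refine Finset.sum_congr rfl fun i _ => ?_
  rw [sum_kronecker']
  simp only [Matrix.sum_mul, Matrix.mul_sum]
  refine Finset.sum_congr rfl fun j _ => ?_
  have : Matrix.single i j (G i j) = G i j • Matrix.single i j (1:ℝ) := by
    rw [smul_single, smul_eq_mul, mul_one]
  rw [this, Matrix.smul_kronecker, Matrix.mul_smul, Matrix.smul_mul, std_kron A L D Ltil hLtil]

/-- Lemma 1: for a polynomial `P_m(x) = ∑_{k=0}^m a_k x^k` and `Q = L D Lᵀ`,
`P_m(𝓛_A)[Q] = L̃ (Γ ⊗ D) L̃ᵀ` where `L̃ = [L, AL, …, AᵐL]` and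
`Γ_{i,j} = a_{i+j} C(i+j, i)` for `i + j ≤ m`, `0` otherwise. -/
theorem stmt_0 (N r m : ℕ) (a : Fin (m + 1) → ℝ)
    (A : Matrix (Fin N) (Fin N) ℝ) (L : Matrix (Fin N) (Fin r) ℝ)
    (D : Matrix (Fin r) (Fin r) ℝ)
    (Q : Matrix (Fin N) (Fin N) ℝ) (hQ : Q = L * D * Lᵀ)
    (Ltil : Matrix (Fin N) (Fin (m + 1) × Fin r) ℝ)
    (hLtil : ∀ i : Fin N, ∀ kj : Fin (m + 1) × Fin r,
      Ltil i kj = (A ^ (kj.1 : ℕ) * L) i kj.2)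
    (Γ : Matrix (Fin (m + 1)) (Fin (m + 1)) ℝ)
    (hΓ : ∀ i j : Fin (m + 1),
      Γ i j = if h : (i : ℕ) + (j : ℕ) ≤ m
        then a ⟨(i : ℕ) + (j : ℕ), Nat.lt_succ_of_le h⟩ *
          (Nat.choose ((i : ℕ) + (j : ℕ)) (i : ℕ) : ℝ)
        else 0) :
    ∑ k : Fin (m + 1), a k • lyapIter A (k : ℕ) Q = Ltil * (Γ ⊗ₖ D) * Ltilᵀ := by
  subst hQ
  -- abbreviations over ℕ
  set S : ℕ → ℕ → Matrix (Fin N) (Fin N) ℝ :=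
    fun i j => A ^ i * (L * D * Lᵀ) * (Aᵀ) ^ j with hS
  set b : ℕ → ℝ := fun k => if h : k ≤ m then a ⟨k, Nat.lt_succ_of_le h⟩ else 0 with hb
  -- rewrite RHS
  rw [kron_sum_form A L D Ltil hLtil Γ]
  have hSL : ∀ i j : ℕ, (A ^ i * L) * D * (A ^ j * L)ᵀ = S i j := by
    intro i j
    simp [hS, Matrix.transpose_mul, Matrix.transpose_pow, Matrix.mul_assoc]
  have hRHS : ∑ i : Fin (m+1), ∑ j : Fin (m+1),
      Γ i j • ((A ^ (i:ℕ) * L) * D * (A ^ (j:ℕ) * L)ᵀ)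
      = ∑ i ∈ Finset.range (m+1), ∑ j ∈ Finset.range (m+1),
          (if i + j ≤ m then (b (i+j) * ((i+j).choose i : ℝ)) else 0) • S i j := by
    rw [← Fin.sum_univ_eq_sum_range
      (fun i => ∑ j ∈ Finset.range (m+1),
        (if i + j ≤ m then (b (i+j) * ((i+j).choose i : ℝ)) else 0) • S i j)]
    refine Finset.sum_congr rfl fun i _ => ?_
    rw [← Fin.sum_univ_eq_sum_range
      (fun j => (if (i:ℕ) + j ≤ m then (b ((i:ℕ)+j) * (((i:ℕ)+j).choose (i:ℕ) : ℝ)) else 0) • S (i:ℕ) j)]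
    refine Finset.sum_congr rfl fun j _ => ?_
    rw [hΓ i j, hSL]
    by_cases h : (i:ℕ) + (j:ℕ) ≤ m
    · rw [dif_pos h, if_pos h, hb]
      simp [h]
    · rw [dif_neg h, if_neg h]
  rw [hRHS]
  -- rewrite LHS
  have hLHS : ∑ k : Fin (m + 1), a k • lyapIter A (k : ℕ) (L * D * Lᵀ)
      = ∑ k ∈ Finset.range (m+1), ∑ i ∈ Finset.range (k+1),
          (b k * (k.choose i : ℝ)) • S i (k - i) := by
    rw [← Fin.sum_univ_eq_sum_range
      (fun k => ∑ i ∈ Finset.range (k+1), (b k * (k.choose i : ℝ)) • S i (k - i))]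
    refine Finset.sum_congr rfl fun k _ => ?_
    rw [lyapIter_eq, Finset.smul_sum]
    refine Finset.sum_congr rfl fun i _ => ?_
    rw [smul_smul, hb]
    simp [Nat.lt_succ_iff.mp k.isLt, hS]
  rw [hLHS]
  -- combinatorial reindexing
  rw [Finset.sum_sigma']
  have : ∀ i ∈ Finset.range (m+1),
      (∑ j ∈ Finset.range (m+1),
        (if i + j ≤ m then (b (i+j) * ((i+j).choose i : ℝ)) else 0) • S i j)
      = ∑ j ∈ Finset.range (m+1),
          (if i + j ≤ m then (b (i+j) * ((i+j).choose i : ℝ)) • S i j else 0) := by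
    intro i _
    refine Finset.sum_congr rfl fun j _ => ?_
    split <;> simp
  rw [Finset.sum_congr rfl this, ← Finset.sum_product']
  rw [← Finset.sum_filter]
  refine Finset.sum_nbij' (fun p => (p.2, p.1 - p.2)) (fun p => ⟨p.1 + p.2, p.1⟩) ?_ ?_ ?_ ?_ ?_
  · rintro ⟨k, i⟩ hk
    simp only [Finset.mem_sigma, Finset.mem_range] at hk
    simp only [Finset.mem_filter, Finset.mem_product, Finset.mem_range]
    omega
  · rintro ⟨i, j⟩ hij
    simp only [Finset.mem_filter, Finset.mem_product, Finset.mem_range] at hij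
    simp only [Finset.mem_sigma, Finset.mem_range]
    omega
  · rintro ⟨k, i⟩ hk
    simp only [Finset.mem_sigma, Finset.mem_range] at hk
    simp only [Sigma.mk.inj_iff]
    constructor
    · omega
    · exact heq_of_eq rfl
  · rintro ⟨i, j⟩ hij
    simp only [Finset.mem_filter, Finset.mem_product, Finset.mem_range] at hij
    simp [Nat.add_sub_cancel_left]
  · rintro ⟨k, i⟩ hk
    simp only [Finset.mem_sigma, Finset.mem_range] at hk
    have h1 : i + (k - i) = k := by omega
    simp [h1]
end

section
/- Let A \in \mathbb{R}^{N\times N}, L \in \mathbb{R}^{N\times r}, D \in \mathbb{R}^{r\times r}, Q = L D L^T, m \in \mathbb{N}, and l \ge 1. Then the truncated Taylor approximation of the operator \varphi-function satisfies \sum_{k=0}^m \frac{1}{(k+l)!}\mathcal{L}_A^k[Q] = \widetilde{L}_l\,(T \otimes D)\,\widetilde{L}_l^T, where \widetilde{L}_l = [L, AL, \frac{1}{2!}A^2L, \ldots, \frac{1}{m!}A^m L] \in \mathbb{R}^{N\times r(m+1)} has i-th block column \frac{1}{i!}A^i L (i = 0,\ldots,m), and T \in \mathbb{R}^{(m+1)\times(m+1)}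 has entries (0-indexed) T_{i,j} = \prod_{q=1}^{l} \frac{1}{i+j+q} if i+j \le m and T_{i,j} = 0 otherwise. -/
open Matrix Finset
open scoped Kronecker

lemma lyap_eq {N : ℕ} (A : Matrix (Fin N) (Fin N) ℝ) (k : ℕ) (Q : Matrix (Fin N) (Fin N) ℝ) :
    lyapIter A k Q = ∑ i ∈ range (k+1), (k.choose i : ℝ) • (A^i * Q * Aᵀ^(k-i)) := by
  have hop : lyapIter A k Q
      = ((LinearMap.mulLeft ℝ A + LinearMap.mulRight ℝ Aᵀ) ^ k) Q := by
    induction k with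
    | zero => rfl
    | succ k ih =>
        rw [lyapIter, Function.iterate_succ_apply', ← lyapIter, ih, pow_succ',
          Module.End.mul_apply]
        simp [LinearMap.mulLeft_apply, LinearMap.mulRight_apply]
  rw [hop, (LinearMap.commute_mulLeft_right A Aᵀ).add_pow, LinearMap.sum_apply]
  refine Finset.sum_congr rfl fun i _ => ?_
  rw [Module.End.mul_apply, Module.End.mul_apply, Module.End.natCast_apply,
    LinearMap.pow_mulLeft, LinearMap.pow_mulRight, LinearMap.mulLeft_apply,
    LinearMap.mulRight_apply]
  rw [smul_mul_assoc, mul_smul_comm, Nat.cast_smul_eq_nsmul, mul_assoc]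

lemma fact_prod (n l : ℕ) : n.factorial * ∏ q ∈ Icc 1 l, (n + q) = (n + l).factorial := by
  induction l with
  | zero => simp
  | succ l ih =>
      rw [Finset.prod_Icc_succ_top (Nat.le_add_left 1 l), ← mul_assoc, ih,
        ← Nat.add_assoc, Nat.factorial_succ, Nat.mul_comm]

lemma coef_eq (i j l : ℕ) :
    ((i.factorial : ℝ))⁻¹ * ((j.factorial : ℝ))⁻¹ * ∏ q ∈ Icc 1 l, ((i + j + q : ℕ) : ℝ)⁻¹
      = (((i + j + l).factorial : ℝ))⁻¹ * ((i + j).choose i) := by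
  have h1 : (((i+j).factorial : ℝ)) * ∏ q ∈ Icc 1 l, ((i + j + q : ℕ) : ℝ) = ((i+j+l).factorial : ℝ) := by
    rw [← Nat.cast_prod, ← Nat.cast_mul, fact_prod]
  have h2 : ((i+j).choose i : ℝ) * (i.factorial : ℝ) * (j.factorial : ℝ) = ((i+j).factorial : ℝ) := by
    have h := Nat.choose_mul_factorial_mul_factorial (Nat.le_add_right i j)
    rw [Nat.add_sub_cancel_left] at h
    rw [← Nat.cast_mul, ← Nat.cast_mul, h]
  have hfi : (i.factorial : ℝ) ≠ 0 := Nat.cast_ne_zero.2 i.factorial_ne_zero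
  have hfj : (j.factorial : ℝ) ≠ 0 := Nat.cast_ne_zero.2 j.factorial_ne_zero
  have hfij : (((i+j+l).factorial : ℝ)) ≠ 0 := Nat.cast_ne_zero.2 (i+j+l).factorial_ne_zero
  have hprod : (∏ q ∈ Icc 1 l, ((i + j + q : ℕ) : ℝ)) ≠ 0 := by
    refine Finset.prod_ne_zero_iff.2 fun q hq => ?_
    have h1q := (Finset.mem_Icc.1 hq).1
    exact Nat.cast_ne_zero.2 (by omega)
  rw [Finset.prod_inv_distrib]
  push_cast at h1 h2 hprod ⊢
  field_simp
  linear_combination -h1 - (∏ x ∈ Icc 1 l, ((i:ℝ) + ↑j + ↑x)) * h2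

/-- The degree-`m` truncated Taylor approximation of `φ_l(𝓛_A)` applied to `Q = L D Lᵀ`
admits the factorization `L̃_l (T ⊗ D) L̃_lᵀ`, where `L̃_l = [L, AL, (1/2!)A²L, …, (1/m!)AᵐL]`
and `T_{i,j} = ∏_{q=1}^l 1/(i+j+q)` for `i + j ≤ m`, `0` otherwise. -/
theorem stmt_1 (N r m l : ℕ) (hl : 1 ≤ l)
    (A : Matrix (Fin N) (Fin N) ℝ) (L : Matrix (Fin N) (Fin r) ℝ)
    (D : Matrix (Fin r) (Fin r) ℝ)
    (Q : Matrix (Fin N) (Fin N) ℝ) (hQ : Q = L * D * Lᵀ)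
    (Ltil : Matrix (Fin N) (Fin (m + 1) × Fin r) ℝ)
    (hLtil : ∀ i : Fin N, ∀ kj : Fin (m + 1) × Fin r,
      Ltil i kj = ((Nat.factorial (kj.1 : ℕ) : ℝ))⁻¹ * (A ^ (kj.1 : ℕ) * L) i kj.2)
    (T : Matrix (Fin (m + 1)) (Fin (m + 1)) ℝ)
    (hT : ∀ i j : Fin (m + 1),
      T i j = if (i : ℕ) + (j : ℕ) ≤ m
        then ∏ q ∈ Finset.Icc 1 l, (((i : ℕ) + (j : ℕ) + q : ℕ) : ℝ)⁻¹
        else 0) :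
    ∑ k ∈ Finset.range (m + 1), ((Nat.factorial (k + l) : ℝ))⁻¹ • lyapIter A k Q
      = Ltil * (T ⊗ₖ D) * Ltilᵀ := by
  subst hQ
  ext a b
  -- entry of a power sandwich
  have hent : ∀ i j : ℕ, (A^i * (L * D * Lᵀ) * Aᵀ^j) a b
      = ∑ p : Fin r, ∑ q : Fin r, (A^i * L) a p * D p q * (A^j * L) b q := by
    intro i j
    have hmat : A^i * (L * D * Lᵀ) * Aᵀ^j = (A^i * L) * D * (A^j * L)ᵀ := by
      rw [Matrix.transpose_mul, Matrix.transpose_pow]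
      simp only [Matrix.mul_assoc]
    rw [hmat, Matrix.mul_apply]
    rw [Finset.sum_comm]
    refine Finset.sum_congr rfl fun p _ => ?_
    rw [Matrix.mul_apply, Finset.sum_mul]
    refine Finset.sum_congr rfl fun q _ => ?_
    rw [Matrix.transpose_apply]
  -- the common value
  set g : ℕ → ℕ → ℝ := fun i j =>
    (((i + j + l).factorial : ℝ))⁻¹ * ((i + j).choose i : ℝ)
      * (A^i * (L * D * Lᵀ) * Aᵀ^j) a b with hg
  have hL : (∑ k ∈ Finset.range (m + 1),
        ((Nat.factorial (k + l) : ℝ))⁻¹ • lyapIter A k (L * D * Lᵀ)) a b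
      = ∑ k ∈ range (m + 1), ∑ i ∈ range (k + 1), g i (k - i) := by
    rw [Matrix.sum_apply]
    refine Finset.sum_congr rfl fun k hk => ?_
    rw [lyap_eq, Matrix.smul_apply, Matrix.sum_apply, Finset.smul_sum]
    refine Finset.sum_congr rfl fun i hi => ?_
    have hik : i ≤ k := Nat.lt_succ_iff.1 (Finset.mem_range.1 hi)
    have h1 : i + (k - i) = k := Nat.add_sub_cancel' hik
    simp only [Matrix.smul_apply, smul_eq_mul, hg, h1]
    ring
  have hreindex : ∑ k ∈ range (m + 1), ∑ i ∈ range (k + 1), g i (k - i)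
      = ∑ p ∈ (range (m + 1) ×ˢ range (m + 1)).filter (fun p => p.1 + p.2 ≤ m),
          g p.1 p.2 := by
    rw [Finset.sum_sigma' (range (m + 1)) (fun k => range (k + 1)) (fun k i => g i (k - i))]
    refine Finset.sum_nbij' (fun p => (p.2, p.1 - p.2)) (fun p => ⟨p.1 + p.2, p.1⟩)
      ?_ ?_ ?_ ?_ ?_
    · rintro ⟨k, i⟩ h
      simp only [Finset.mem_sigma, Finset.mem_range] at h
      simp only [Finset.mem_filter, Finset.mem_product, Finset.mem_range]
      omega
    · rintro ⟨i, j⟩ h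
      simp only [Finset.mem_filter, Finset.mem_product, Finset.mem_range] at h
      simp only [Finset.mem_sigma, Finset.mem_range]
      omega
    · rintro ⟨k, i⟩ h
      simp only [Finset.mem_sigma, Finset.mem_range] at h
      simp only [Sigma.mk.inj_iff]
      constructor
      · omega
      · exact heq_of_eq rfl
    · rintro ⟨i, j⟩ h
      simp only [Finset.mem_filter, Finset.mem_product, Finset.mem_range] at h
      simp [Nat.add_sub_cancel_left]
    · rintro ⟨k, i⟩ h
      rfl
  have hR : (Ltil * (T ⊗ₖ D) * Ltilᵀ) a b
      = ∑ p ∈ (range (m + 1) ×ˢ range (m + 1)).filter (fun p => p.1 + p.2 ≤ m),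
          g p.1 p.2 := by
    have step1 : (Ltil * (T ⊗ₖ D) * Ltilᵀ) a b
        = ∑ i : Fin (m + 1), ∑ j : Fin (m + 1),
            (((i : ℕ).factorial : ℝ))⁻¹ * (((j : ℕ).factorial : ℝ))⁻¹ * T i j
              * ∑ p : Fin r, ∑ q : Fin r,
                  (A^(i : ℕ) * L) a p * D p q * (A^(j : ℕ) * L) b q := by
      conv_lhs =>
        rw [Matrix.mul_apply]
        simp only [Matrix.mul_apply]
        simp only [Matrix.transpose_apply, Matrix.kroneckerMap_apply]
        simp only [hLtil]
        simp only [Finset.sum_mul]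
      rw [Finset.sum_comm]
      rw [Fintype.sum_prod_type]
      refine Finset.sum_congr rfl fun i _ => ?_
      rw [Finset.sum_comm]
      rw [Fintype.sum_prod_type]
      refine Finset.sum_congr rfl fun j _ => ?_
      rw [Finset.sum_comm]
      simp_rw [Finset.mul_sum]
      refine Finset.sum_congr rfl fun p _ => ?_
      refine Finset.sum_congr rfl fun q _ => ?_
      ring
    rw [step1]
    simp_rw [← hent]
    simp_rw [hT]
    have step2 : ∀ i j : Fin (m + 1),
        (((i : ℕ).factorial : ℝ))⁻¹ * (((j : ℕ).factorial : ℝ))⁻¹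
            * (if (i : ℕ) + (j : ℕ) ≤ m
                then ∏ q ∈ Finset.Icc 1 l, (((i : ℕ) + (j : ℕ) + q : ℕ) : ℝ)⁻¹
                else 0)
            * (A^(i : ℕ) * (L * D * Lᵀ) * Aᵀ^(j : ℕ)) a b
        = if (i : ℕ) + (j : ℕ) ≤ m then g (i : ℕ) (j : ℕ) else 0 := by
      intro i j
      by_cases hij : (i : ℕ) + (j : ℕ) ≤ m
      · rw [if_pos hij, if_pos hij, hg]
        simp only []
        rw [← coef_eq]
      · rw [if_neg hij, if_neg hij]
        ring
    simp_rw [step2]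
    rw [Finset.sum_filter, Finset.sum_product]
    rw [← Fin.sum_univ_eq_sum_range (fun i => ∑ j ∈ range (m + 1),
      if i + j ≤ m then g i j else 0) (m + 1)]
    refine Finset.sum_congr rfl fun i _ => ?_
    rw [← Fin.sum_univ_eq_sum_range (fun j => if (i : ℕ) + j ≤ m then g (i : ℕ) j else 0) (m + 1)]
  rw [hL, hreindex, hR]
end

section
/- (Quasi-backward error representation of the scaling and recursive procedure.) Let \mathcal{A} be a unital Banach algebra over \mathbb{R}, let L, H \in \mathcal{A} with L H = H L, set M = L + H and E = \exp(M). Fix an integer l \ge 1 and suppose T_1, \ldots, T_l \in \mathcal{A} satisfy L^j T_j = E - \sum_{i=0}^{j-1} \frac{1}{i!} L^i for each j = 1, \ldots, l. Define \Phi_1 = T_l and, for integers k \ge 2, \Phi_k = (1 - \tfrac{1}{k})^l E\,\Phi_{k-1} + \sum_{j=1}^{l} (1-\tfrac{1}{k})^{l-j} (\tfrac{1}{k})^{j} \tfrac{1}{(l-j)!}\, T_j. Then for every integer k \ge 1, k^l\, L^l\, \Phi_k = \exp(k M) - \sum_{j=0}^{l-1} \frac{k^j}{j!} L^j. -/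
open Finset

/-- Quasi-backward error representation of the scaling and recursive procedure
(Theorem 1 of the paper, abstracted to a unital Banach algebra). -/
theorem stmt_2 {𝓐 : Type*} [NormedRing 𝓐] [NormedAlgebra ℝ 𝓐] [CompleteSpace 𝓐]
    (L H : 𝓐) (hcomm : L * H = H * L) (M : 𝓐) (hM : M = L + H)
    (E : 𝓐) (hE : E = NormedSpace.exp M)
    (l : ℕ) (hl : 1 ≤ l) (T : ℕ → 𝓐)
    (hT : ∀ j ∈ Finset.Icc 1 l,
      L ^ j * T j = E - ∑ i ∈ Finset.range j, ((Nat.factorial i : ℝ))⁻¹ • L ^ i)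
    (Φ : ℕ → 𝓐) (hΦ1 : Φ 1 = T l)
    (hΦ : ∀ k : ℕ, 2 ≤ k →
      Φ k = ((1 - 1 / (k : ℝ)) ^ l) • (E * Φ (k - 1)) +
        ∑ j ∈ Finset.Icc 1 l,
          ((1 - 1 / (k : ℝ)) ^ (l - j) * (1 / (k : ℝ)) ^ j *
            ((Nat.factorial (l - j) : ℝ))⁻¹) • T j) :
    ∀ k : ℕ, 1 ≤ k →
      ((k : ℝ) ^ l) • (L ^ l * Φ k) =
        NormedSpace.exp ((k : ℝ) • M) -
          ∑ j ∈ Finset.range l, ((k : ℝ) ^ j / (Nat.factorial j : ℝ)) • L ^ j := by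
  have hLM : Commute L M := by
    rw [hM]; exact (Commute.refl L).add_right hcomm
  have hLE : Commute L E := by
    rw [hE]; exact hLM.exp_right
  intro k hk
  induction k, hk using Nat.le_induction with
  | base =>
      simp only [Nat.cast_one, one_pow, one_smul, one_div]
      rw [hΦ1, hT l (by simp [hl]), hE]
  | succ k hk ih =>
      set c : ℝ := ((k : ℝ) + 1) with hc
      have hc0 : c ≠ 0 := by positivity
      have hcast : ((k + 1 : ℕ) : ℝ) = c := by push_cast [hc]; ring
      rw [hΦ (k + 1) (by omega)]
      simp only [Nat.add_sub_cancel, hcast]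
      -- distribute L^l and the scalar
      rw [mul_add, smul_add, mul_smul_comm, smul_smul, Finset.mul_sum, Finset.smul_sum]
      simp only [mul_smul_comm, smul_smul]
      -- Term A
      have hcoefA : c ^ l * (1 - 1 / c) ^ l = (k : ℝ) ^ l := by
        rw [← mul_pow]; congr 1; field_simp; rw [hc]; ring
      have hAmul : L ^ l * (E * Φ k) = E * (L ^ l * Φ k) := by
        rw [← mul_assoc, (hLE.pow_left l).eq, mul_assoc]
      have hME : NormedSpace.exp (c • M) = E * NormedSpace.exp ((k : ℝ) • M) := by
        rw [hE, ← NormedSpace.exp_add_of_commute_of_mem_ball (𝕂 := ℝ) ((Commute.refl M).smul_right (k : ℝ))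
          ((NormedSpace.expSeries_radius_eq_top ℝ 𝓐).symm ▸ edist_lt_top _ _)
          ((NormedSpace.expSeries_radius_eq_top ℝ 𝓐).symm ▸ edist_lt_top _ _)]
        congr 1
        rw [hc, add_smul, one_smul, add_comm]
      have hA : (c ^ l * (1 - 1 / c) ^ l) • (L ^ l * (E * Φ k)) =
          NormedSpace.exp (c • M) -
            ∑ j ∈ Finset.range l, ((k : ℝ) ^ j / (Nat.factorial j : ℝ)) • (L ^ j * E) := by
        rw [hcoefA, hAmul, ← mul_smul_comm, ih, mul_sub, hME, Finset.mul_sum]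
        congr 1
        refine Finset.sum_congr rfl fun j _ => ?_
        rw [mul_smul_comm, (hLE.pow_left j).eq]
      rw [hA]
      -- Term B : rewrite each summand
      have hB : ∀ j ∈ Finset.Icc 1 l,
          (c ^ l * ((1 - 1 / c) ^ (l - j) * (1 / c) ^ j * ((Nat.factorial (l - j) : ℝ))⁻¹)) •
              (L ^ l * T j) =
            ((k : ℝ) ^ (l - j) * ((Nat.factorial (l - j) : ℝ))⁻¹) • (L ^ (l - j) * E) -
              ∑ i ∈ Finset.range j,
                ((k : ℝ) ^ (l - j) * ((Nat.factorial (l - j) : ℝ))⁻¹ *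
                  ((Nat.factorial i : ℝ))⁻¹) • L ^ (l - j + i) := by
        intro j hj
        obtain ⟨hj1, hjl⟩ := Finset.mem_Icc.mp hj
        have hcoef : c ^ l * ((1 - 1 / c) ^ (l - j) * (1 / c) ^ j *
            ((Nat.factorial (l - j) : ℝ))⁻¹) =
            (k : ℝ) ^ (l - j) * ((Nat.factorial (l - j) : ℝ))⁻¹ := by
          have hsplit : c ^ l = c ^ (l - j) * c ^ j := by
            rw [← pow_add, Nat.sub_add_cancel hjl]
          rw [hsplit]
          have h1 : c ^ (l - j) * (1 - 1 / c) ^ (l - j) = (k : ℝ) ^ (l - j) := by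
            rw [← mul_pow]; congr 1; field_simp; rw [hc]; ring
          have h2 : c ^ j * (1 / c) ^ j = 1 := by
            rw [← mul_pow]; field_simp; exact one_pow j
          calc c ^ (l - j) * c ^ j * ((1 - 1 / c) ^ (l - j) * (1 / c) ^ j *
                ((Nat.factorial (l - j) : ℝ))⁻¹)
              = (c ^ (l - j) * (1 - 1 / c) ^ (l - j)) * (c ^ j * (1 / c) ^ j) *
                ((Nat.factorial (l - j) : ℝ))⁻¹ := by ring
            _ = (k : ℝ) ^ (l - j) * ((Nat.factorial (l - j) : ℝ))⁻¹ := by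
                rw [h1, h2, mul_one]
        have hLl : L ^ l * T j = L ^ (l - j) * (L ^ j * T j) := by
          rw [← mul_assoc, ← pow_add, Nat.sub_add_cancel hjl]
        rw [hcoef, hLl, hT j hj, mul_sub, smul_sub, Finset.mul_sum, Finset.smul_sum]
        congr 1
        refine Finset.sum_congr rfl fun i _ => ?_
        rw [mul_smul_comm, smul_smul, ← pow_add]
      rw [Finset.sum_congr rfl hB, Finset.sum_sub_distrib]
      -- cancellation of the E-sums
      have hcancel : ∑ j ∈ Finset.Icc 1 l,
          ((k : ℝ) ^ (l - j) * ((Nat.factorial (l - j) : ℝ))⁻¹) • (L ^ (l - j) * E) =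
          ∑ j ∈ Finset.range l, ((k : ℝ) ^ j / (Nat.factorial j : ℝ)) • (L ^ j * E) := by
        refine Finset.sum_bij' (fun j _ => l - j) (fun m _ => l - m) ?_ ?_ ?_ ?_ ?_
        · intro a ha
          obtain ⟨h1, h2⟩ := Finset.mem_Icc.mp ha
          simp only [Finset.mem_range]
          omega
        · intro a ha
          have := Finset.mem_range.mp ha
          simp only [Finset.mem_Icc]
          omega
        · intro a ha
          obtain ⟨h1, h2⟩ := Finset.mem_Icc.mp ha
          show l - (l - a) = a
          omega
        · intro a ha
          have := Finset.mem_range.mp ha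
          show l - (l - a) = a
          omega
        · intro a ha
          rw [div_eq_mul_inv]
      rw [hcancel, sub_add_sub_cancel]
      -- the double-sum identity
      have hrhs : ∀ m ∈ Finset.range l,
          (c ^ m / (Nat.factorial m : ℝ)) • L ^ m =
          ∑ i ∈ Finset.range (m + 1),
            ((k : ℝ) ^ (m - i) * ((Nat.factorial (m - i) : ℝ))⁻¹ *
              ((Nat.factorial i : ℝ))⁻¹) • L ^ m := by
        intro m _
        rw [← Finset.sum_smul]
        congr 1
        have hbin : c ^ m = ∑ i ∈ Finset.range (m + 1),
            (1 : ℝ) ^ i * (k : ℝ) ^ (m - i) * (m.choose i) := by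
          rw [hc, add_comm, add_pow]
        rw [hbin, Finset.sum_div]
        refine Finset.sum_congr rfl fun i hi => ?_
        have him : i ≤ m := by
          have := Finset.mem_range.mp hi; omega
        have hkey : ((m.choose i : ℕ) : ℝ) * (Nat.factorial i : ℝ) *
            (Nat.factorial (m - i) : ℝ) = (Nat.factorial m : ℝ) := by
          rw [← Nat.cast_mul, ← Nat.cast_mul,
            Nat.choose_mul_factorial_mul_factorial him]
        have hf1 : (Nat.factorial (m - i) : ℝ) ≠ 0 := Nat.cast_ne_zero.mpr (Nat.factorial_ne_zero _)
        have hf2 : (Nat.factorial i : ℝ) ≠ 0 := Nat.cast_ne_zero.mpr (Nat.factorial_ne_zero _)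
        have hfm : (Nat.factorial m : ℝ) ≠ 0 := Nat.cast_ne_zero.mpr (Nat.factorial_ne_zero _)
        field_simp
        rw [← hkey]
        ring
      rw [Finset.sum_congr rfl hrhs]
      congr 1
      -- now both sides are double sums; use a sigma bijection
      rw [Finset.sum_sigma', Finset.sum_sigma']
      refine Finset.sum_bij' (fun p _ => (⟨l - p.1 + p.2, p.2⟩ : (_ : ℕ) × ℕ))
        (fun q _ => (⟨l - (q.1 - q.2), q.2⟩ : (_ : ℕ) × ℕ)) ?_ ?_ ?_ ?_ ?_
      · rintro ⟨j, i⟩ hp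
        simp only [Finset.mem_sigma, Finset.mem_Icc, Finset.mem_range] at hp ⊢
        omega
      · rintro ⟨m, i⟩ hq
        simp only [Finset.mem_sigma, Finset.mem_Icc, Finset.mem_range] at hq ⊢
        omega
      · rintro ⟨j, i⟩ hp
        simp only [Finset.mem_sigma, Finset.mem_Icc, Finset.mem_range] at hp
        simp only [Sigma.mk.inj_iff]
        exact ⟨by omega, heq_of_eq rfl⟩
      · rintro ⟨m, i⟩ hq
        simp only [Finset.mem_sigma, Finset.mem_Icc, Finset.mem_range] at hq
        simp only [Sigma.mk.inj_iff]
        exact ⟨by omega, heq_of_eq rfl⟩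
      · rintro ⟨j, i⟩ hp
        simp only [Finset.mem_sigma, Finset.mem_Icc, Finset.mem_range] at hp
        have h1 : l - j + i - i = l - j := by omega
        simp only [h1]
end

section
/- Let A \in \mathbb{R}^{N\times N} and let \mathcal{L}_A be the Lyapunov operator. For every integer l \ge 1, every integer k \ge 1, and every Q \in \mathbb{R}^{N\times N}: k^l\,\varphi_l(k\mathcal{L}_A)[Q] = (k-1)^l\,\exp(\mathcal{L}_A)\big[\varphi_l\big((k-1)\mathcal{L}_A\big)[Q]\big] + \sum_{j=1}^{l} \frac{(k-1)^{l-j}}{(l-j)!}\,\varphi_j(\mathcal{L}_A)[Q]. -/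
open Matrix Finset

/-- The scaled operator `φ`-function `φ_l(c𝓛_A)[Q] = ∑_{k=0}^∞ c^k 𝓛_A^k[Q]/(k+l)!`;
in particular `φ_0(c𝓛_A) = exp(c𝓛_A)`. -/
noncomputable def phiLyap {N : ℕ} (A : Matrix (Fin N) (Fin N) ℝ) (c : ℝ) (l : ℕ)
    (Q : Matrix (Fin N) (Fin N) ℝ) : Matrix (Fin N) (Fin N) ℝ :=
  ∑' k : ℕ, (c ^ k / (Nat.factorial (k + l) : ℝ)) • lyapIter A k Q


attribute [local instance] Matrix.normedAddCommGroup Matrix.normedSpace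

@[reducible] noncomputable def matTopo {N : ℕ} : TopologicalSpace (Matrix (Fin N) (Fin N) ℝ) :=
  Pi.topologicalSpace

attribute [local instance 2000] matTopo

variable {N : ℕ}

/-- The Lyapunov operator as a continuous linear map. -/
noncomputable def lyapCLM (A : Matrix (Fin N) (Fin N) ℝ) :
    Matrix (Fin N) (Fin N) ℝ →L[ℝ] Matrix (Fin N) (Fin N) ℝ :=
  LinearMap.toContinuousLinearMap
    { toFun := fun X => A * X + X * Aᵀ
      map_add' := fun X Y => by simp [Matrix.mul_add, Matrix.add_mul]; abel
      map_smul' := fun r X => by simp [Matrix.mul_smul, Matrix.smul_mul] }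

lemma lyapCLM_apply (A X : Matrix (Fin N) (Fin N) ℝ) :
    lyapCLM A X = A * X + X * Aᵀ := rfl

lemma lyapIter_eq_pow (A : Matrix (Fin N) (Fin N) ℝ) (k : ℕ)
    (Q : Matrix (Fin N) (Fin N) ℝ) : lyapIter A k Q = ((lyapCLM A) ^ k) Q := by
  induction k with
  | zero => simp [lyapIter]
  | succ n ih =>
    rw [lyapIter, Function.iterate_succ_apply', pow_succ']
    rw [ContinuousLinearMap.mul_apply, ← ih, lyapCLM_apply]
    rfl

lemma norm_pow_le_aux (T : Matrix (Fin N) (Fin N) ℝ →L[ℝ] Matrix (Fin N) (Fin N) ℝ)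
    (k : ℕ) : ‖T ^ k‖ ≤ ‖T‖ ^ k := by
  induction k with
  | zero => rw [pow_zero, pow_zero]; exact ContinuousLinearMap.norm_id_le
  | succ n ih =>
    rw [pow_succ, pow_succ]
    exact le_trans (norm_mul_le _ _)
      (mul_le_mul_of_nonneg_right ih (norm_nonneg _))

lemma summable_norm_phi (A : Matrix (Fin N) (Fin N) ℝ) (c : ℝ) (l : ℕ) :
    Summable fun k : ℕ => ‖(c ^ k / (Nat.factorial (k + l) : ℝ)) • (lyapCLM A) ^ k‖ := by
  refine Summable.of_nonneg_of_le (fun _ => norm_nonneg _) (fun k => ?_)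
    (Real.summable_pow_div_factorial (|c| * ‖lyapCLM A‖))
  refine le_trans (le_of_eq (norm_smul (β := Matrix (Fin N) (Fin N) ℝ →L[ℝ] Matrix (Fin N) (Fin N) ℝ) _ _)) ?_
  calc ‖c ^ k / (Nat.factorial (k + l) : ℝ)‖ * ‖(lyapCLM A) ^ k‖
      ≤ (|c| ^ k / (Nat.factorial k : ℝ)) * ‖lyapCLM A‖ ^ k := by
        refine mul_le_mul ?_ (norm_pow_le_aux _ _) (norm_nonneg _) (by positivity)
        rw [Real.norm_eq_abs, abs_div, abs_pow, Nat.abs_cast]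
        gcongr
        exact Nat.le_add_right k l
    _ = (|c| * ‖lyapCLM A‖) ^ k / (Nat.factorial k : ℝ) := by rw [mul_pow]; ring

lemma summable_phi (A : Matrix (Fin N) (Fin N) ℝ) (c : ℝ) (l : ℕ) :
    Summable fun k : ℕ => (c ^ k / (Nat.factorial (k + l) : ℝ)) • (lyapCLM A) ^ k :=
  (summable_norm_phi A c l).of_norm

/-- The operator `φ_l(c 𝓛_A)`. -/
noncomputable def PhiOp (A : Matrix (Fin N) (Fin N) ℝ) (c : ℝ) (l : ℕ) :
    Matrix (Fin N) (Fin N) ℝ →L[ℝ] Matrix (Fin N) (Fin N) ℝ :=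
  ∑' k : ℕ, (c ^ k / (Nat.factorial (k + l) : ℝ)) • (lyapCLM A) ^ k

lemma phiLyap_eq (A : Matrix (Fin N) (Fin N) ℝ) (c : ℝ) (l : ℕ)
    (Q : Matrix (Fin N) (Fin N) ℝ) : phiLyap A c l Q = PhiOp A c l Q := by
  have h1 : phiLyap A c l Q
      = ∑' k : ℕ, (ContinuousLinearMap.apply ℝ (Matrix (Fin N) (Fin N) ℝ) Q)
          ((c ^ k / (Nat.factorial (k + l) : ℝ)) • (lyapCLM A) ^ k) := by
    refine tsum_congr fun k => ?_
    simp [lyapIter_eq_pow]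
  rw [h1, ← ContinuousLinearMap.map_tsum _ (summable_phi A c l)]
  rfl

lemma coeff_identity (l n : ℕ) (hl : 1 ≤ l) (c : ℝ) :
    (c + 1) ^ l * ((c + 1) ^ n / (Nat.factorial (n + l) : ℝ))
      = c ^ l * (∑ p ∈ Finset.HasAntidiagonal.antidiagonal n,
          ((1 : ℝ) ^ p.1 / (Nat.factorial (p.1 + 0) : ℝ))
            * (c ^ p.2 / (Nat.factorial (p.2 + l) : ℝ)))
        + ∑ j ∈ Finset.Icc 1 l,
            (c ^ (l - j) / (Nat.factorial (l - j) : ℝ))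
              * ((1 : ℝ) ^ n / (Nat.factorial (n + j) : ℝ)) := by
  set t : ℕ → ℝ := fun i =>
    c ^ i / ((Nat.factorial i : ℝ) * (Nat.factorial (l + n - i) : ℝ)) with ht
  have hfac : ∀ m : ℕ, (Nat.factorial m : ℝ) ≠ 0 := fun m => by
    exact_mod_cast (Nat.factorial_pos m).ne'
  have hL : (c + 1) ^ l * ((c + 1) ^ n / (Nat.factorial (n + l) : ℝ))
      = ∑ i ∈ range (l + n + 1), t i := by
    rw [mul_div_assoc', ← pow_add, add_pow, sum_div]
    refine Finset.sum_congr rfl fun i hi => ?_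
    have hi' : i ≤ l + n := by
      have := Finset.mem_range.mp hi; omega
    have hch : ((l + n).choose i * Nat.factorial i * Nat.factorial (l + n - i) : ℝ)
        = (Nat.factorial (l + n) : ℝ) := by
      exact_mod_cast congrArg (Nat.cast (R := ℝ))
        (Nat.choose_mul_factorial_mul_factorial hi')
    have hnl : (n + l) = (l + n) := Nat.add_comm n l
    rw [hnl, ht]
    field_simp
    rw [← hch]; ring
  have hsplit : ∑ i ∈ range (l + n + 1), t i
      = (∑ i ∈ range l, t i) + ∑ b ∈ range (n + 1), t (l + b) := by
    have h : l + n + 1 = l + (n + 1) := by omega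
    rw [h, Finset.sum_range_add]
  have hpiece2 : c ^ l * (∑ p ∈ Finset.HasAntidiagonal.antidiagonal n,
        ((1 : ℝ) ^ p.1 / (Nat.factorial (p.1 + 0) : ℝ))
          * (c ^ p.2 / (Nat.factorial (p.2 + l) : ℝ)))
      = ∑ b ∈ range (n + 1), t (l + b) := by
    rw [Finset.Nat.sum_antidiagonal_eq_sum_range_succ_mk, Finset.mul_sum]
    rw [← Finset.sum_range_reflect (fun b => t (l + b)) (n + 1)]
    refine Finset.sum_congr rfl fun k hk => ?_
    have hk' : k ≤ n := by have := Finset.mem_range.mp hk; omega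
    have h1 : n + 1 - 1 - k = n - k := by omega
    simp only [h1, ht]
    have h2 : l + n - (l + (n - k)) = k := by omega
    have h3 : n - k + l = l + (n - k) := by omega
    rw [h2, h3, pow_add, one_pow, Nat.add_zero]
    ring
  have hpiece1 : ∑ j ∈ Finset.Icc 1 l,
        (c ^ (l - j) / (Nat.factorial (l - j) : ℝ))
          * ((1 : ℝ) ^ n / (Nat.factorial (n + j) : ℝ))
      = ∑ i ∈ range l, t i := by
    refine Finset.sum_nbij' (fun j => l - j) (fun i => l - i) ?_ ?_ ?_ ?_ ?_
    · intro a ha; simp only [Finset.mem_Icc] at ha; simp only [Finset.mem_range]; omega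
    · intro a ha; simp only [Finset.mem_range] at ha; simp only [Finset.mem_Icc]; omega
    · intro a ha; simp only [Finset.mem_Icc] at ha; omega
    · intro a ha; simp only [Finset.mem_range] at ha; omega
    · intro a ha
      simp only [Finset.mem_Icc] at ha
      simp only [ht]
      have h4 : l + n - (l - a) = n + a := by omega
      rw [h4, one_pow]
      rw [div_mul_div_comm, mul_one]
  rw [hL, hsplit, hpiece1, hpiece2]
  ring

set_option synthInstance.maxHeartbeats 1000000 in
lemma key_op (A : Matrix (Fin N) (Fin N) ℝ) (l : ℕ) (hl : 1 ≤ l) (c : ℝ) :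
    ((c + 1) ^ l) • PhiOp A (c + 1) l
      = (c ^ l) • (PhiOp A 1 0 * PhiOp A c l)
        + ∑ j ∈ Finset.Icc 1 l,
            (c ^ (l - j) / (Nat.factorial (l - j) : ℝ)) • PhiOp A 1 j := by
  set L := lyapCLM A with hLdef
  have hmul : PhiOp A 1 0 * PhiOp A c l
      = ∑' n : ℕ, ∑ p ∈ Finset.HasAntidiagonal.antidiagonal n,
          (((1:ℝ) ^ p.1 / (Nat.factorial (p.1 + 0) : ℝ)) • L ^ p.1)
            * ((c ^ p.2 / (Nat.factorial (p.2 + l) : ℝ)) • L ^ p.2) :=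
    tsum_mul_tsum_eq_tsum_sum_antidiagonal_of_summable_norm
      (summable_norm_phi A 1 0) (summable_norm_phi A c l)
  have hprod_summable : Summable fun n : ℕ => ∑ p ∈ Finset.HasAntidiagonal.antidiagonal n,
      (((1:ℝ) ^ p.1 / (Nat.factorial (p.1 + 0) : ℝ)) • L ^ p.1)
        * ((c ^ p.2 / (Nat.factorial (p.2 + l) : ℝ)) • L ^ p.2) :=
    (summable_norm_sum_mul_antidiagonal_of_summable_norm
      (summable_norm_phi A 1 0) (summable_norm_phi A c l)).of_norm
  have h1 : ((c + 1) ^ l) • PhiOp A (c + 1) l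
      = ∑' n : ℕ, ((c + 1) ^ l) • (((c + 1) ^ n / (Nat.factorial (n + l) : ℝ)) • L ^ n) :=
    (Summable.tsum_const_smul _ (summable_phi A (c + 1) l)).symm
  have h2 : (c ^ l) • (PhiOp A 1 0 * PhiOp A c l)
      = ∑' n : ℕ, (c ^ l) • (∑ p ∈ Finset.HasAntidiagonal.antidiagonal n,
          (((1:ℝ) ^ p.1 / (Nat.factorial (p.1 + 0) : ℝ)) • L ^ p.1)
            * ((c ^ p.2 / (Nat.factorial (p.2 + l) : ℝ)) • L ^ p.2)) := by
    rw [hmul]; exact (Summable.tsum_const_smul _ hprod_summable).symm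
  have h3 : ∑ j ∈ Finset.Icc 1 l,
        (c ^ (l - j) / (Nat.factorial (l - j) : ℝ)) • PhiOp A 1 j
      = ∑' n : ℕ, ∑ j ∈ Finset.Icc 1 l,
          (c ^ (l - j) / (Nat.factorial (l - j) : ℝ))
            • (((1:ℝ) ^ n / (Nat.factorial (n + j) : ℝ)) • L ^ n) := by
    rw [Summable.tsum_finsetSum fun j _ => (summable_phi A 1 j).const_smul _]
    exact Finset.sum_congr rfl fun j _ => (Summable.tsum_const_smul _ (summable_phi A 1 j)).symm
  rw [h1, h2, h3, ← Summable.tsum_add (hprod_summable.const_smul _)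
    (summable_sum fun j _ => (summable_phi A 1 j).const_smul _)]
  refine tsum_congr fun n => ?_
  have hA : ∀ p ∈ Finset.HasAntidiagonal.antidiagonal n,
      (((1:ℝ) ^ p.1 / (Nat.factorial (p.1 + 0) : ℝ)) • L ^ p.1)
        * ((c ^ p.2 / (Nat.factorial (p.2 + l) : ℝ)) • L ^ p.2)
      = (((1:ℝ) ^ p.1 / (Nat.factorial (p.1 + 0) : ℝ))
          * (c ^ p.2 / (Nat.factorial (p.2 + l) : ℝ))) • L ^ n := fun p hp => by
    rw [← Finset.HasAntidiagonal.mem_antidiagonal.mp hp, pow_add]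
    ext x i j
    simp [smul_smul, mul_comm]
    ring
  rw [Finset.sum_congr rfl hA, ← Finset.sum_smul, smul_smul, smul_smul]
  simp only [smul_smul]
  rw [← hLdef, ← Finset.sum_smul]
  refine (congrArg (· • L ^ n) (coeff_identity l n hl c)).trans ?_
  ext x i j
  simp [add_mul]

/-- The recursion underlying the scaling-and-recursive procedure:
`k^l φ_l(k𝓛_A)[Q] = (k-1)^l exp(𝓛_A)[φ_l((k-1)𝓛_A)[Q]]
  + ∑_{j=1}^l ((k-1)^{l-j}/(l-j)!) φ_j(𝓛_A)[Q]`. -/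
theorem stmt_10 (N l : ℕ) (hl : 1 ≤ l) (k : ℕ) (hk : 1 ≤ k)
    (A Q : Matrix (Fin N) (Fin N) ℝ) :
    ((k : ℝ) ^ l) • phiLyap A (k : ℝ) l Q
      = (((k : ℝ) - 1) ^ l) • phiLyap A 1 0 (phiLyap A ((k : ℝ) - 1) l Q)
        + ∑ j ∈ Finset.Icc 1 l,
            (((k : ℝ) - 1) ^ (l - j) / (Nat.factorial (l - j) : ℝ)) • phiLyap A 1 j Q := by
  have hc : ((k : ℝ) - 1) + 1 = (k : ℝ) := by ring
  have key := key_op A l hl ((k : ℝ) - 1)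
  rw [hc] at key
  have happ := congrArg (fun T => T Q) key
  simp only [ContinuousLinearMap.add_apply, ContinuousLinearMap.smul_apply,
    ContinuousLinearMap.coe_sum', Finset.sum_apply, ContinuousLinearMap.mul_apply] at happ
  rw [phiLyap_eq A (k : ℝ) l Q, phiLyap_eq A ((k : ℝ) - 1) l Q,
    phiLyap_eq A 1 0 (PhiOp A ((k : ℝ) - 1) l Q)]
  have hj : ∀ j, phiLyap A 1 j Q = PhiOp A 1 j Q := fun j => phiLyap_eq A 1 j Q
  simp only [hj]
  exact happ
end

section
/- (Exactness of the matrix-valued exponential Euler scheme for constant inhomogeneity.) Let A, N_0, X_0 \in \mathbb{R}^{N\times N}, let t_0 \in \mathbb{R}, and let X : \mathbb{R} \to \mathbb{R}^{N\times N} be differentiable with X(t_0) = X_0 and X'(t) = A X(t) + X(t) A^T + N_0 for all t. Then for every h \in \mathbb{R}, X(t_0 + h) = \exp(h\mathcal{L}_A)[X_0] + h\,\varphi_1(h\mathcal{L}_A)[N_0]. -/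
open Matrix

attribute [local instance] Matrix.frobeniusNormedAddCommGroup Matrix.frobeniusNormedSpace

section aux
open NormedSpace

@[reducible] noncomputable def frobTop {N : ℕ} : TopologicalSpace (Matrix (Fin N) (Fin N) ℝ) :=
  @UniformSpace.toTopologicalSpace _ (@PseudoMetricSpace.toUniformSpace _
    (@SeminormedAddCommGroup.toPseudoMetricSpace _ (Matrix.frobeniusSeminormedAddCommGroup)))

attribute [local instance] frobTop

/-- The Lyapunov operator as a continuous linear map. -/
noncomputable def lyapL {N : ℕ} (A : Matrix (Fin N) (Fin N) ℝ) :
    Matrix (Fin N) (Fin N) ℝ →L[ℝ] Matrix (Fin N) (Fin N) ℝ :=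
  LinearMap.toContinuousLinearMap (LinearMap.mulLeft ℝ A + LinearMap.mulRight ℝ Aᵀ)

lemma lyapIter_norm_le {N : ℕ} (A : Matrix (Fin N) (Fin N) ℝ) (k : ℕ)
    (X : Matrix (Fin N) (Fin N) ℝ) :
    ‖lyapIter A k X‖ ≤ ‖lyapL A‖ ^ k * ‖X‖ := by
  induction k with
  | zero => simp [lyapIter]
  | succ k ih =>
    have hs : lyapIter A (k+1) X = lyapL A (lyapIter A k X) := by
      simp [lyapIter, Function.iterate_succ_apply']; rfl
    rw [hs]
    calc ‖lyapL A (lyapIter A k X)‖ ≤ ‖lyapL A‖ * ‖lyapIter A k X‖ := (lyapL A).le_opNorm _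
      _ ≤ ‖lyapL A‖ * (‖lyapL A‖ ^ k * ‖X‖) := mul_le_mul_of_nonneg_left ih (norm_nonneg _)
      _ = ‖lyapL A‖ ^ (k + 1) * ‖X‖ := by ring

set_option maxHeartbeats 1000000 in
lemma lyap_summable {N : ℕ} (A : Matrix (Fin N) (Fin N) ℝ) (h : ℝ) (a : ℕ → ℝ)
    (ha : ∀ n, |a n| ≤ |h| ^ n / n.factorial) (Y : Matrix (Fin N) (Fin N) ℝ) :
    Summable fun n => a n • lyapIter A n Y := by
  apply Summable.of_norm
  refine Summable.of_nonneg_of_le (f := fun n => (|h| * ‖lyapL A‖) ^ n / n.factorial * ‖Y‖)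
    (fun n => norm_nonneg _) (fun n => ?_)
    (((Real.summable_pow_div_factorial (|h| * ‖lyapL A‖)).mul_right ‖Y‖))
  rw [norm_smul]
  calc ‖a n‖ * ‖lyapIter A n Y‖ ≤ (|h| ^ n / n.factorial) * (‖lyapL A‖ ^ n * ‖Y‖) := by
        apply mul_le_mul (by simpa using ha n) (lyapIter_norm_le A n Y) (norm_nonneg _)
        positivity
    _ = (|h| * ‖lyapL A‖) ^ n / n.factorial * ‖Y‖ := by rw [mul_pow]; ring

/-- The augmented operator `(X, Y) ↦ (𝓛_A X + Y, 0)` on the product space. -/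
noncomputable def lyapT {N : ℕ} (A : Matrix (Fin N) (Fin N) ℝ) :
    (Matrix (Fin N) (Fin N) ℝ × Matrix (Fin N) (Fin N) ℝ) →L[ℝ]
      (Matrix (Fin N) (Fin N) ℝ × Matrix (Fin N) (Fin N) ℝ) :=
  ((lyapL A).comp (ContinuousLinearMap.fst ℝ _ _) + ContinuousLinearMap.snd ℝ _ _).prod 0

lemma lyapT_pow {N : ℕ} (A X₀ N₀ : Matrix (Fin N) (Fin N) ℝ) (n : ℕ) :
    (lyapT A ^ (n + 1)) (X₀, N₀) = (lyapIter A (n + 1) X₀ + lyapIter A n N₀, 0) := by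
  have hs : ∀ k Y, lyapIter A (k+1) Y = A * lyapIter A k Y + lyapIter A k Y * Aᵀ := by
    intro k Y; simp [lyapIter, Function.iterate_succ_apply']
  induction n with
  | zero => simp [pow_one, lyapT, hs, lyapIter]; rfl
  | succ n ih =>
    have hTa : ∀ q : Matrix (Fin N) (Fin N) ℝ × Matrix (Fin N) (Fin N) ℝ,
        lyapT A q = (A * q.1 + q.1 * Aᵀ + q.2, 0) := fun q => rfl
    rw [pow_succ', ContinuousLinearMap.mul_apply, ih, hTa]
    simp only [hs, Prod.mk.injEq]
    refine ⟨?_, trivial⟩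
    noncomm_ring

set_option maxHeartbeats 1000000 in
set_option synthInstance.maxHeartbeats 400000 in
lemma exp_fst {N : ℕ} (A X₀ N₀ : Matrix (Fin N) (Fin N) ℝ) (h : ℝ) :
    ((exp (h • lyapT A)) (X₀, N₀)).1
      = (∑' k : ℕ, (h ^ k / (Nat.factorial k : ℝ)) • lyapIter A k X₀)
        + h • ∑' k : ℕ, (h ^ k / (Nat.factorial (k + 1) : ℝ)) • lyapIter A k N₀ := by
  classical
  set T := lyapT A with hT
  set p : Matrix (Fin N) (Fin N) ℝ × Matrix (Fin N) (Fin N) ℝ := (X₀, N₀) with hp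
  have hsum : Summable fun n : ℕ => ((n.factorial : ℝ))⁻¹ • (h • T) ^ n :=
    expSeries_summable' (𝕂 := ℝ) (h • T)
  have hsum2 : Summable fun n : ℕ => ((n.factorial : ℝ))⁻¹ • ((h • T) ^ n) p := by
    have := hsum.map (ContinuousLinearMap.apply ℝ
      (Matrix (Fin N) (Fin N) ℝ × Matrix (Fin N) (Fin N) ℝ) p)
      (ContinuousLinearMap.apply ℝ _ p).continuous
    simpa [Function.comp_def] using this
  have e1 : (exp (h • T)) p = ∑' n : ℕ, ((n.factorial : ℝ))⁻¹ • ((h • T) ^ n) p := by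
    rw [exp_eq_tsum ℝ]
    have := (ContinuousLinearMap.apply ℝ
      (Matrix (Fin N) (Fin N) ℝ × Matrix (Fin N) (Fin N) ℝ) p).map_tsum hsum
    simpa [Function.comp_def] using this
  have e2 : ((exp (h • T)) p).1 = ∑' n : ℕ, ((n.factorial : ℝ))⁻¹ • (((h • T) ^ n) p).1 := by
    rw [e1]
    have := (ContinuousLinearMap.fst ℝ (Matrix (Fin N) (Fin N) ℝ)
      (Matrix (Fin N) (Fin N) ℝ)).map_tsum hsum2
    simpa using this
  have hc : Summable fun n : ℕ => ((n.factorial : ℝ))⁻¹ • (((h • T) ^ n) p).1 := by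
    have := hsum2.map (ContinuousLinearMap.fst ℝ (Matrix (Fin N) (Fin N) ℝ)
      (Matrix (Fin N) (Fin N) ℝ)) (ContinuousLinearMap.fst ℝ _ _).continuous
    simpa [Function.comp_def] using this
  set d : ℕ → Matrix (Fin N) (Fin N) ℝ :=
    fun n => (h ^ n / (Nat.factorial n : ℝ)) • lyapIter A n X₀ with hdd
  set v : ℕ → Matrix (Fin N) (Fin N) ℝ :=
    fun n => (h ^ n / (Nat.factorial (n + 1) : ℝ)) • lyapIter A n N₀ with hvv
  have hd : Summable d := by
    apply lyap_summable A h
    intro n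
    rw [abs_div, abs_pow, Nat.abs_cast]
  have hv : Summable v := by
    apply lyap_summable A h
    intro n
    rw [abs_div, abs_pow, Nat.abs_cast]
    apply div_le_div_of_nonneg_left (by positivity) (by positivity)
    exact_mod_cast Nat.factorial_le (Nat.le_succ n)
  have hw : Summable fun n => h • v n := hv.const_smul h
  have hkey : ∀ n : ℕ, ((Nat.factorial (n+1) : ℝ))⁻¹ • (((h • T) ^ (n+1)) p).1
      = d (n + 1) + h • v n := by
    intro n
    rw [smul_pow, ContinuousLinearMap.smul_apply, hT, hp, lyapT_pow]
    simp only [Prod.smul_fst, smul_add, smul_smul, hdd, hvv]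
    congr 1 <;> congr 1 <;> ring
  have hds : Summable fun n => d (n + 1) := by
    rw [← summable_nat_add_iff 1] at hd
    exact hd
  rw [e2, ← hv.tsum_const_smul h, hc.tsum_eq_zero_add, hd.tsum_eq_zero_add]
  have hc0 : ((Nat.factorial 0 : ℝ))⁻¹ • (((h • T) ^ 0) p).1 = X₀ := by
    simp [hp]
  have hd0 : d 0 = X₀ := by simp [hdd, lyapIter]
  rw [hc0, hd0]
  have : ∑' n : ℕ, ((Nat.factorial (n+1) : ℝ))⁻¹ • (((h • T) ^ (n+1)) p).1
      = (∑' n, d (n + 1)) + ∑' n, h • v n := by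
    rw [← hds.tsum_add hw]
    exact tsum_congr hkey
  rw [this, add_assoc]

lemma sol_eq_exp {N : ℕ} (A N₀ X₀ : Matrix (Fin N) (Fin N) ℝ)
    (Y : ℝ → Matrix (Fin N) (Fin N) ℝ) (hY0 : Y 0 = X₀)
    (hY : ∀ t, HasDerivAt Y (A * Y t + Y t * Aᵀ + N₀) t) (h : ℝ) :
    Y h = ((exp (h • lyapT A)) (X₀, N₀)).1 := by
  have hgd : ∀ t : ℝ, HasDerivAt (fun u : ℝ => (exp (u • lyapT A)) (X₀, N₀))
      (lyapT A ((exp (t • lyapT A)) (X₀, N₀))) t := by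
    intro t
    have h1 := hasDerivAt_exp_smul_const' (𝕂 := ℝ) (lyapT A) t
    have h2 := ((ContinuousLinearMap.apply ℝ _ ((X₀, N₀) :
      Matrix (Fin N) (Fin N) ℝ × Matrix (Fin N) (Fin N) ℝ)).hasFDerivAt.comp_hasDerivAt t h1)
    simpa [ContinuousLinearMap.mul_apply, Function.comp_def] using h2
  have hTa : ∀ q : Matrix (Fin N) (Fin N) ℝ × Matrix (Fin N) (Fin N) ℝ,
      lyapT A q = (A * q.1 + q.1 * Aᵀ + q.2, 0) := fun q => rfl
  have hfd : ∀ t : ℝ, HasDerivAt (fun u : ℝ => (Y u, N₀))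
      (lyapT A ((Y t, N₀))) t := by
    intro t
    have := (hY t).prodMk (hasDerivAt_const t N₀)
    simpa [hTa] using this
  have hmem : (0:ℝ) ∈ Set.Ioo (min h 0 - 1) (max h 0 + 1) := by
    constructor
    · have := min_le_right h 0; linarith
    · have := le_max_right h 0; linarith
  have key : Set.EqOn (fun u : ℝ => (Y u, N₀))
      (fun u : ℝ => (exp (u • lyapT A)) (X₀, N₀)) (Set.Ioo (min h 0 - 1) (max h 0 + 1)) := by
    apply ODE_solution_unique_of_mem_Ioo (v := fun _ x => lyapT A x)
      (s := fun _ => Set.univ) (K := ‖lyapT A‖₊)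
      (fun t _ => (lyapT A).lipschitz.lipschitzOnWith) hmem
      (fun t _ => ⟨hfd t, trivial⟩) (fun t _ => ⟨hgd t, trivial⟩)
    simp only [zero_smul, exp_zero, ContinuousLinearMap.one_apply, hY0]
  have hh : h ∈ Set.Ioo (min h 0 - 1) (max h 0 + 1) := by
    constructor
    · have := min_le_left h 0; linarith
    · have := le_max_left h 0; linarith
  exact congrArg Prod.fst (key hh)

end aux

/-- Exactness of the matrix-valued exponential Euler scheme for constant inhomogeneity:
if `X' = A X + X Aᵀ + N₀` with `X(t₀) = X₀`, then
`X(t₀+h) = exp(h𝓛_A)[X₀] + h φ₁(h𝓛_A)[N₀]`. -/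
theorem stmt_13 (N : ℕ) (A N₀ X₀ : Matrix (Fin N) (Fin N) ℝ) (t₀ : ℝ)
    (X : ℝ → Matrix (Fin N) (Fin N) ℝ) (hX0 : X t₀ = X₀)
    (hX : ∀ t : ℝ, HasDerivAt X (A * X t + X t * Aᵀ + N₀) t) :
    ∀ h : ℝ,
      X (t₀ + h)
        = (∑' k : ℕ, (h ^ k / (Nat.factorial k : ℝ)) • lyapIter A k X₀)
          + h • ∑' k : ℕ, (h ^ k / (Nat.factorial (k + 1) : ℝ)) • lyapIter A k N₀ := by
  intro h
  have hY : ∀ t : ℝ, HasDerivAt (fun u : ℝ => X (t₀ + u))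
      (A * X (t₀ + t) + X (t₀ + t) * Aᵀ + N₀) t := by
    intro t
    have h1 : HasDerivAt (fun u : ℝ => t₀ + u) 1 t := (hasDerivAt_id t).const_add t₀
    have := (hX (t₀ + t)).scomp t h1
    simp only [Function.comp_def, one_smul] at this
    exact this
  have := sol_eq_exp A N₀ X₀ (fun u => X (t₀ + u)) (by simpa using hX0) hY h
  rw [this]
  exact exp_fst A X₀ N₀ h
end

section
/- Let \mathcal{A} be a Banach algebra over \mathbb{R}, B \in \mathcal{A}, and let p \ge 1 and k \ge 1 be integers with k \ge p(p-1). Then \|B^k\|^{1/k} \le \max\big(\|B^p\|^{1/p},\; \|B^{p+1}\|^{1/(p+1)}\big); equivalently, \|B^k\| \le \max\big(\|B^p\|^{1/p}, \|B^{p+1}\|^{1/(p+1)}\big)^{k}. -/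
/-- Any `k ≥ p(p-1)` (with `p ≥ 1`) can be written as `a*p + b*(p+1)`. -/
lemma exists_rep (p k : ℕ) (hp : 1 ≤ p) (hkp : p * (p - 1) ≤ k) :
    ∃ a b : ℕ, k = a * p + b * (p + 1) := by
  refine ⟨k / p - k % p, k % p, ?_⟩
  have hb : k % p < p := Nat.mod_lt _ hp
  have hq : p - 1 ≤ k / p := by
    rw [Nat.le_div_iff_mul_le hp]
    calc (p - 1) * p = p * (p - 1) := Nat.mul_comm _ _
      _ ≤ k := hkp
  have hba : k % p ≤ k / p := le_trans (by omega) hq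
  have hdm : p * (k / p) + k % p = k := Nat.div_add_mod k p
  have : (k / p - k % p) * p + k % p * (p + 1) = (k / p - k % p + k % p) * p + k % p := by
    ring
  rw [this, Nat.sub_add_cancel hba]
  exact (Nat.div_add_mod' k p).symm

/-- Norm of a product of powers, valid when the total exponent is positive. -/
lemma norm_pow_mul_pow_le {𝓐 : Type*} [NormedRing 𝓐] (x y : 𝓐) (m n : ℕ)
    (h : 1 ≤ m + n) : ‖x ^ m * y ^ n‖ ≤ ‖x‖ ^ m * ‖y‖ ^ n := by
  rcases Nat.eq_zero_or_pos m with hm | hm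
  · subst hm; simpa using norm_pow_le' y (by omega)
  rcases Nat.eq_zero_or_pos n with hn | hn
  · subst hn; simpa using norm_pow_le' x hm
  exact le_trans (norm_mul_le _ _)
    (mul_le_mul (norm_pow_le' x hm) (norm_pow_le' y hn) (norm_nonneg _) (by positivity))

/-- In a Banach algebra, for `p ≥ 1` and `k ≥ p(p-1)` (`k ≥ 1`),
`‖B^k‖^{1/k} ≤ max(‖B^p‖^{1/p}, ‖B^{p+1}‖^{1/(p+1)})`. -/
theorem stmt_17 {𝓐 : Type*} [NormedRing 𝓐] [NormedAlgebra ℝ 𝓐] [CompleteSpace 𝓐]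
    (B : 𝓐) (p k : ℕ) (hp : 1 ≤ p) (hk : 1 ≤ k) (hkp : p * (p - 1) ≤ k) :
    ‖B ^ k‖ ^ ((k : ℝ)⁻¹)
      ≤ max (‖B ^ p‖ ^ ((p : ℝ)⁻¹)) (‖B ^ (p + 1)‖ ^ (((p : ℝ) + 1)⁻¹))
    ∧ ‖B ^ k‖
      ≤ (max (‖B ^ p‖ ^ ((p : ℝ)⁻¹)) (‖B ^ (p + 1)‖ ^ (((p : ℝ) + 1)⁻¹))) ^ (k : ℝ) := by
  set M : ℝ := max (‖B ^ p‖ ^ ((p : ℝ)⁻¹)) (‖B ^ (p + 1)‖ ^ (((p : ℝ) + 1)⁻¹)) with hM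
  have hM0 : 0 ≤ M := le_trans (Real.rpow_nonneg (norm_nonneg _) _) (le_max_left _ _)
  have h1 : ‖B ^ p‖ ≤ M ^ p := by
    have hle : ‖B ^ p‖ ^ ((p : ℝ)⁻¹) ≤ M := le_max_left _ _
    have := pow_le_pow_left₀ (Real.rpow_nonneg (norm_nonneg _) _) hle p
    rwa [Real.rpow_inv_natCast_pow (norm_nonneg _) (by omega)] at this
  have h2 : ‖B ^ (p + 1)‖ ≤ M ^ (p + 1) := by
    have hle : ‖B ^ (p + 1)‖ ^ (((p + 1 : ℕ) : ℝ))⁻¹ ≤ M := by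
      push_cast; exact le_max_right _ _
    have := pow_le_pow_left₀ (Real.rpow_nonneg (norm_nonneg _) _) hle (p + 1)
    rwa [Real.rpow_inv_natCast_pow (norm_nonneg _) (by omega)] at this
  obtain ⟨a, b, hab⟩ := exists_rep p k hp hkp
  have hab1 : 1 ≤ a + b := by
    by_contra h
    have ha : a = 0 := by omega
    have hb : b = 0 := by omega
    rw [ha, hb] at hab; simp at hab; omega
  have hkey : ‖B ^ k‖ ≤ M ^ k := by
    calc ‖B ^ k‖ = ‖(B ^ p) ^ a * (B ^ (p + 1)) ^ b‖ := by
          rw [← pow_mul, ← pow_mul, ← pow_add, hab]; ring_nf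
      _ ≤ ‖B ^ p‖ ^ a * ‖B ^ (p + 1)‖ ^ b := norm_pow_mul_pow_le _ _ _ _ hab1
      _ ≤ (M ^ p) ^ a * (M ^ (p + 1)) ^ b :=
          mul_le_mul (pow_le_pow_left₀ (norm_nonneg _) h1 a)
            (pow_le_pow_left₀ (norm_nonneg _) h2 b) (by positivity) (by positivity)
      _ = M ^ k := by rw [← pow_mul, ← pow_mul, ← pow_add, hab]; ring_nf
  have hk0 : (k : ℝ) ≠ 0 := by positivity
  constructor
  · have hle := Real.rpow_le_rpow (norm_nonneg _) hkey (by positivity : (0:ℝ) ≤ (k : ℝ)⁻¹)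
    calc ‖B ^ k‖ ^ ((k : ℝ)⁻¹) ≤ (M ^ k) ^ ((k : ℝ)⁻¹) := hle
      _ = M := by
          rw [← Real.rpow_natCast M k, ← Real.rpow_mul hM0, mul_inv_cancel₀ hk0,
            Real.rpow_one]
  · rwa [Real.rpow_natCast]
end
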